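/- arXiv:2211.02446 — 3 statements merged into one kernel-verified Lean document; each statement's English description precedes it below -/
import Mathlib

section
/- Let δ ∈ (1/2, 1]. The Bellman function Φ satisfies the recurrence Φ(x) = ((1 − x)/x) · (1 + sup_{y ∈ [1 − x + δ, 1]} Φ(y)) for every x ∈ [δ, 1]. -/
/-!
Every admissible sequence starting at `x` is `x` followed by an admissible sequence starting
at some `y ∈ [1 - x + δ, 1]`, and conversely; factoring `(1 - x) / x` out of the series shows
that the value of the sequence is `(1 - x) / x * (1 + value of the tail)`. Hence the set of
values attainable from `x` is the image of the values attainable from `[1 - x + δ, 1]` under the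
continuous increasing map `r ↦ (1 - x) / x * (1 + r)`, which commutes with suprema. All values
are bounded because every factor `(1 - s i) / s i` is at most `(1 - δ) / δ < 1` when `δ > 1/2`.
-/

noncomputable section

/-- An admissible sequence for the Bellman problem: `s 0 = x`, all terms lie in `[δ, 1]`,
and `s (n+1) ≥ 1 - s n + δ`. -/
def Adm (δ x : ℝ) (s : ℕ → ℝ) : Prop :=
  s 0 = x ∧ (∀ n, s n ∈ Set.Icc δ 1) ∧ ∀ n, 1 - s n + δ ≤ s (n + 1)

/-- The Bellman function `Φ`. -/
def Phi (δ x : ℝ) : ℝ :=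
  sSup {r : ℝ | ∃ s : ℕ → ℝ, Adm δ x s ∧
    r = ∑' n : ℕ, ∏ i ∈ Finset.range (n + 1), (1 - s i) / s i}

open Finset

section PartialProducts

theorem tsum_prod_range_succ_eq_mul_one_add {R : Type*} [CommRing R] [TopologicalSpace R]
    [IsTopologicalRing R] [T2Space R] (f : ℕ → R)
    (hf : Summable fun n => ∏ i ∈ range (n + 1), f (i + 1)) :
    ∑' n, ∏ i ∈ range (n + 1), f i = f 0 * (1 + ∑' n, ∏ i ∈ range (n + 1), f (i + 1)) := by
  have hshift : Summable fun n => ∏ i ∈ range n, f (i + 1) := (summable_nat_add_iff 1).mp hf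
  simp_rw [prod_range_succ' f]
  rw [hshift.tsum_mul_right, hshift.tsum_eq_zero_add, mul_comm]
  simp

variable {f : ℕ → ℝ} {q : ℝ}

theorem prod_range_succ_le_pow (hf₀ : ∀ i, 0 ≤ f i) (hfq : ∀ i, f i ≤ q) (hq : q ≤ 1) (n : ℕ) :
    ∏ i ∈ range (n + 1), f i ≤ q ^ n :=
  calc ∏ i ∈ range (n + 1), f i ≤ ∏ _i ∈ range (n + 1), q :=
        prod_le_prod (fun i _ => hf₀ i) (fun i _ => hfq i)
    _ = q ^ (n + 1) := by rw [prod_const, card_range]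
    _ ≤ q ^ n := pow_le_pow_of_le_one ((hf₀ 0).trans (hfq 0)) hq n.le_succ

theorem summable_prod_range_succ (hf₀ : ∀ i, 0 ≤ f i) (hfq : ∀ i, f i ≤ q) (hq : q < 1) :
    Summable fun n => ∏ i ∈ range (n + 1), f i :=
  .of_nonneg_of_le (fun _ => prod_nonneg fun i _ => hf₀ i)
    (prod_range_succ_le_pow hf₀ hfq hq.le)
    (summable_geometric_of_lt_one ((hf₀ 0).trans (hfq 0)) hq)

theorem tsum_prod_range_succ_le (hf₀ : ∀ i, 0 ≤ f i) (hfq : ∀ i, f i ≤ q) (hq : q < 1) :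
    ∑' n, ∏ i ∈ range (n + 1), f i ≤ (1 - q)⁻¹ := by
  have hq₀ : 0 ≤ q := (hf₀ 0).trans (hfq 0)
  rw [← tsum_geometric_of_lt_one hq₀ hq]
  exact (summable_prod_range_succ hf₀ hfq hq).tsum_le_tsum (prod_range_succ_le_pow hf₀ hfq hq.le)
    (summable_geometric_of_lt_one hq₀ hq)

end PartialProducts

theorem csSup_biUnion_eq_csSup_image {α ι : Type*} [ConditionallyCompleteLattice α]
    {I : Set ι} {S : ι → Set α} (hI : I.Nonempty) (hS : ∀ i ∈ I, (S i).Nonempty)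
    (hbdd : BddAbove (⋃ i ∈ I, S i)) :
    sSup (⋃ i ∈ I, S i) = sSup ((fun i => sSup (S i)) '' I) := by
  have hSbdd : ∀ i ∈ I, BddAbove (S i) := fun i hi =>
    hbdd.mono (Set.subset_biUnion_of_mem hi)
  have hsup_le : ∀ i ∈ I, sSup (S i) ≤ sSup (⋃ i ∈ I, S i) := fun i hi =>
    csSup_le_csSup hbdd (hS i hi) (Set.subset_biUnion_of_mem hi)
  obtain ⟨i, hi⟩ := hI
  obtain ⟨r, hr⟩ := hS i hi
  apply le_antisymm
  · refine csSup_le ⟨r, Set.mem_biUnion hi hr⟩ fun r hr => ?_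
    obtain ⟨j, hj, hrj⟩ := Set.mem_iUnion₂.mp hr
    exact (le_csSup (hSbdd j hj) hrj).trans
      (le_csSup ⟨_, Set.forall_mem_image.mpr hsup_le⟩ ⟨j, hj, rfl⟩)
  · exact csSup_le ⟨_, i, hi, rfl⟩ (Set.forall_mem_image.mpr hsup_le)

namespace Bellman

def value (s : ℕ → ℝ) : ℝ := ∑' n, ∏ i ∈ range (n + 1), (1 - s i) / s i

def values (δ x : ℝ) : Set ℝ := {r | ∃ s, Adm δ x s ∧ r = value s}

theorem phi_eq_sSup_values (δ x : ℝ) : Phi δ x = sSup (values δ x) := rfl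

variable {δ x y : ℝ} {s t : ℕ → ℝ}

theorem Adm.tail (hs : Adm δ x s) : Adm δ (s 1) fun n => s (n + 1) :=
  ⟨rfl, fun n => hs.2.1 (n + 1), fun n => hs.2.2 (n + 1)⟩

theorem Adm.cons (ht : Adm δ y t) (hx : x ∈ Set.Icc δ 1) (hxy : 1 - x + δ ≤ y) :
    Adm δ x fun | 0 => x | n + 1 => t n := by
  refine ⟨rfl, fun | 0 => hx | n + 1 => ht.2.1 n, fun | 0 => ?_ | n + 1 => ht.2.2 n⟩
  exact (ht.1.symm ▸ hxy : 1 - x + δ ≤ t 0)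

theorem values_nonempty (hy : y ∈ Set.Icc δ 1) : (values δ y).Nonempty :=
  have hone : Adm δ 1 fun _ => 1 :=
    ⟨rfl, fun _ => ⟨hy.1.trans hy.2, le_rfl⟩, fun _ => by linarith [hy.1, hy.2]⟩
  ⟨_, _, Adm.cons hone hy (by linarith [hy.1]), rfl⟩

section

variable (hδ : 1 / 2 < δ)
include hδ

theorem one_sub_div_mem_Icc (hy : y ∈ Set.Icc δ 1) : (1 - y) / y ∈ Set.Icc 0 ((1 - δ) / δ) := by
  have hδ₀ : 0 < δ := by linarith
  exact ⟨div_nonneg (by linarith [hy.2]) (by linarith [hy.1]),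
    div_le_div₀ (by linarith [hy.1, hy.2]) (by linarith [hy.1]) hδ₀ hy.1⟩

theorem one_sub_div_lt_one : (1 - δ) / δ < 1 := by
  rw [div_lt_one (by linarith)]
  linarith

theorem summable_prod_one_sub_div (hs : ∀ n, s n ∈ Set.Icc δ 1) :
    Summable fun n => ∏ i ∈ range (n + 1), (1 - s i) / s i :=
  summable_prod_range_succ (fun i => (one_sub_div_mem_Icc hδ (hs i)).1)
    (fun i => (one_sub_div_mem_Icc hδ (hs i)).2) (one_sub_div_lt_one hδ)

theorem value_le (hs : ∀ n, s n ∈ Set.Icc δ 1) : value s ≤ (1 - (1 - δ) / δ)⁻¹ :=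
  tsum_prod_range_succ_le (fun i => (one_sub_div_mem_Icc hδ (hs i)).1)
    (fun i => (one_sub_div_mem_Icc hδ (hs i)).2) (one_sub_div_lt_one hδ)

theorem value_eq_mul_one_add_value_tail (hs : ∀ n, s n ∈ Set.Icc δ 1) :
    value s = (1 - s 0) / s 0 * (1 + value fun n => s (n + 1)) :=
  tsum_prod_range_succ_eq_mul_one_add (fun i => (1 - s i) / s i)
    (summable_prod_one_sub_div hδ fun n => hs (n + 1))

theorem bddAbove_biUnion_values (I : Set ℝ) : BddAbove (⋃ y ∈ I, values δ y) := by
  refine ⟨(1 - (1 - δ) / δ)⁻¹, fun r hr => ?_⟩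
  obtain ⟨y, -, s, hs, rfl⟩ := Set.mem_iUnion₂.mp hr
  exact value_le hδ hs.2.1

theorem values_eq_image_biUnion (hx : x ∈ Set.Icc δ 1) :
    values δ x = (fun r => (1 - x) / x * (1 + r)) '' ⋃ y ∈ Set.Icc (1 - x + δ) 1, values δ y := by
  ext r
  constructor
  · rintro ⟨s, hs, rfl⟩
    have hs₁ : s 1 ∈ Set.Icc (1 - x + δ) 1 := ⟨hs.1 ▸ hs.2.2 0, (hs.2.1 1).2⟩
    refine ⟨_, Set.mem_biUnion hs₁ ⟨_, Adm.tail hs, rfl⟩, ?_⟩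
    rw [value_eq_mul_one_add_value_tail hδ hs.2.1, hs.1]
  · rintro ⟨_, hr, rfl⟩
    obtain ⟨y, hy, t, ht, rfl⟩ := Set.mem_iUnion₂.mp hr
    have hs := Adm.cons ht hx hy.1
    exact ⟨_, hs, (value_eq_mul_one_add_value_tail hδ hs.2.1).symm⟩

end

end Bellman

open Bellman in
theorem bellman_recurrence (δ : ℝ) (hδ : δ ∈ Set.Ioc (1 / 2 : ℝ) 1) (x : ℝ)
    (hx : x ∈ Set.Icc δ 1) :
    Phi δ x = (1 - x) / x * (1 + sSup (Phi δ '' Set.Icc (1 - x + δ) 1)) := by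
  set I := Set.Icc (1 - x + δ) 1
  have hI : I.Nonempty := Set.nonempty_Icc.mpr (by linarith [hx.1])
  have hvalues : ∀ y ∈ I, (values δ y).Nonempty := fun y hy =>
    values_nonempty ⟨by linarith [hy.1, hx.2], hy.2⟩
  have hmono : Monotone fun r : ℝ => (1 - x) / x * (1 + r) := fun _ _ h =>
    mul_le_mul_of_nonneg_left (by linarith) (one_sub_div_mem_Icc hδ.1 hx).1
  have hcont : Continuous fun r : ℝ => (1 - x) / x * (1 + r) := by fun_prop
  have hU : (⋃ y ∈ I, values δ y).Nonempty :=
    let ⟨y, hy⟩ := hI; Set.nonempty_biUnion.mpr ⟨y, hy, hvalues y hy⟩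
  rw [phi_eq_sSup_values, values_eq_image_biUnion hδ.1 hx,
    ← hmono.map_csSup_of_continuousAt hcont.continuousAt hU (bddAbove_biUnion_values hδ.1 I),
    csSup_biUnion_eq_csSup_image hI hvalues (bddAbove_biUnion_values hδ.1 I)]
  rfl
end
end

section
/- Let δ ∈ (1/2, 1]. Then the Bellman function Φ is given by the explicit formula Φ(x) = (1 − x)/δ for all x ∈ [δ, 1]. -/
/-!
Write `P_N = ∏_{i<N} (1 - s_i)/s_i`. Along an admissible sequence the quantity
`∑_{n<N} P_{n+1} + P_N (1 - s_N)/δ` starts at `(1 - x)/δ` and, at step `N`, drops by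
`P_{N+1} (s_{N+1} - (1 - s_N + δ))/δ ≥ 0`; so every partial sum is at most `(1 - x)/δ`.
The greedy sequence `s_{N+1} = 1 - s_N + δ` keeps the quantity constant, and its correction
term `P_N (1 - s_N)/δ = P_{N+1} s_N/δ` tends to `0` because the series converges, so the
greedy sequence attains `(1 - x)/δ`.
-/

noncomputable section

namespace Bellman

def prodRatio (s : ℕ → ℝ) (N : ℕ) : ℝ :=
  ∏ i ∈ Finset.range N, (1 - s i) / s i

def tailValue (δ : ℝ) (s : ℕ → ℝ) (N : ℕ) : ℝ :=
  prodRatio s N * ((1 - s N) / δ)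

def valueToGo (δ : ℝ) (s : ℕ → ℝ) (N : ℕ) : ℝ :=
  ∑ n ∈ Finset.range N, prodRatio s (n + 1) + tailValue δ s N

def greedy (δ x : ℝ) : ℕ → ℝ
  | 0 => x
  | n + 1 => 1 - greedy δ x n + δ

variable {δ x : ℝ} {s : ℕ → ℝ}

lemma prodRatio_succ (s : ℕ → ℝ) (N : ℕ) :
    prodRatio s (N + 1) = prodRatio s N * ((1 - s N) / s N) :=
  Finset.prod_range_succ _ _

lemma prodRatio_nonneg (hδ : 0 < δ) (hs : Adm δ x s) (N : ℕ) : 0 ≤ prodRatio s N :=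
  Finset.prod_nonneg fun i _ ↦
    div_nonneg (sub_nonneg.2 (hs.2.1 i).2) (hδ.trans_le (hs.2.1 i).1).le

lemma tailValue_nonneg (hδ : 0 < δ) (hs : Adm δ x s) (N : ℕ) : 0 ≤ tailValue δ s N :=
  mul_nonneg (prodRatio_nonneg hδ hs N) (div_nonneg (sub_nonneg.2 (hs.2.1 N).2) hδ.le)

lemma valueToGo_zero (s : ℕ → ℝ) : valueToGo δ s 0 = (1 - s 0) / δ := by
  simp [valueToGo, tailValue, prodRatio]

lemma valueToGo_succ (hδ : δ ≠ 0) (hsN : s N ≠ 0) :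
    valueToGo δ s (N + 1) =
      valueToGo δ s N - prodRatio s (N + 1) * (s (N + 1) - (1 - s N + δ)) / δ := by
  simp only [valueToGo, tailValue, Finset.sum_range_succ, prodRatio_succ s N]
  field_simp
  ring

lemma valueToGo_le (hδ : 0 < δ) (hs : Adm δ x s) (N : ℕ) :
    valueToGo δ s N ≤ (1 - x) / δ := by
  have hanti : Antitone (valueToGo δ s) := antitone_nat_of_succ_le fun N ↦ by
    rw [valueToGo_succ hδ.ne' (hδ.trans_le (hs.2.1 N).1).ne', sub_le_self_iff]
    exact div_nonneg (mul_nonneg (prodRatio_nonneg hδ hs _) (sub_nonneg.2 (hs.2.2 N))) hδ.le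
  simpa [valueToGo_zero, hs.1] using hanti (Nat.zero_le N)

lemma sum_prodRatio_le (hδ : 0 < δ) (hs : Adm δ x s) (N : ℕ) :
    ∑ n ∈ Finset.range N, prodRatio s (n + 1) ≤ (1 - x) / δ :=
  (le_add_of_nonneg_right (tailValue_nonneg hδ hs N)).trans (valueToGo_le hδ hs N)

lemma tsum_prodRatio_le (hδ : 0 < δ) (hs : Adm δ x s) :
    ∑' n, prodRatio s (n + 1) ≤ (1 - x) / δ :=
  Real.tsum_le_of_sum_range_le (fun n ↦ prodRatio_nonneg hδ hs (n + 1))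
    (sum_prodRatio_le hδ hs)

lemma greedy_mem (hx : x ∈ Set.Icc δ 1) (n : ℕ) : greedy δ x n ∈ Set.Icc δ 1 := by
  induction n with
  | zero => exact hx
  | succ n ih =>
    simp only [greedy, Set.mem_Icc] at ih ⊢
    constructor <;> linarith [ih.1, ih.2]

lemma adm_greedy (hx : x ∈ Set.Icc δ 1) : Adm δ x (greedy δ x) :=
  ⟨rfl, greedy_mem hx, fun _ ↦ le_rfl⟩

lemma valueToGo_greedy (hδ : 0 < δ) (hx : x ∈ Set.Icc δ 1) (N : ℕ) :
    valueToGo δ (greedy δ x) N = (1 - x) / δ := by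
  induction N with
  | zero => exact valueToGo_zero _
  | succ N ih =>
    have hsN := hδ.trans_le (greedy_mem hx N).1
    rw [valueToGo_succ hδ.ne' hsN.ne', ih]
    simp [greedy]

lemma tailValue_le (hδ : 0 < δ) (hs : Adm δ x s) (N : ℕ) :
    tailValue δ s N ≤ prodRatio s (N + 1) / δ := by
  have hsN : 0 < s N := hδ.trans_le (hs.2.1 N).1
  have htail : tailValue δ s N = prodRatio s (N + 1) * s N / δ := by
    rw [tailValue, prodRatio_succ]
    field_simp
  rw [htail]
  exact div_le_div_of_nonneg_right
    (mul_le_of_le_one_right (prodRatio_nonneg hδ hs _) (hs.2.1 N).2) hδ.le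

lemma tendsto_tailValue_zero (hδ : 0 < δ) (hs : Adm δ x s)
    (hsum : Summable fun n ↦ prodRatio s (n + 1)) :
    Filter.Tendsto (tailValue δ s) Filter.atTop (nhds 0) :=
  squeeze_zero (tailValue_nonneg hδ hs) (tailValue_le hδ hs)
    (by simpa using hsum.tendsto_atTop_zero.div_const δ)

lemma hasSum_prodRatio_greedy (hδ : 0 < δ) (hx : x ∈ Set.Icc δ 1) :
    HasSum (fun n ↦ prodRatio (greedy δ x) (n + 1)) ((1 - x) / δ) := by
  have hs := adm_greedy hx
  have hnonneg (n : ℕ) := prodRatio_nonneg hδ hs (n + 1)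
  have hpartial (N : ℕ) : ∑ n ∈ Finset.range N, prodRatio (greedy δ x) (n + 1) =
      (1 - x) / δ - tailValue δ (greedy δ x) N := by
    rw [← valueToGo_greedy hδ hx N, valueToGo]
    ring
  rw [hasSum_iff_tendsto_nat_of_nonneg hnonneg, funext hpartial]
  simpa using tendsto_const_nhds.sub
    (tendsto_tailValue_zero hδ hs (summable_of_sum_range_le hnonneg (sum_prodRatio_le hδ hs)))

end Bellman

open Bellman in
theorem bellman_formula (δ : ℝ) (hδ : δ ∈ Set.Ioc (1 / 2 : ℝ) 1) (x : ℝ)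
    (hx : x ∈ Set.Icc δ 1) :
    Phi δ x = (1 - x) / δ := by
  have hδ0 : 0 < δ := lt_trans (by norm_num) hδ.1
  refine IsGreatest.csSup_eq ⟨⟨greedy δ x, adm_greedy hx, ?_⟩, ?_⟩
  · exact (hasSum_prodRatio_greedy hδ0 hx).tsum_eq.symm
  · rintro r ⟨s, hs, rfl⟩
    exact tsum_prodRatio_le hδ0 hs
end
end

section
/- Let δ ∈ (1/2, 1]. Then sup_{x ∈ [δ, 1]} Φ(x) = (1 − δ)/δ, where Φ is the Bellman function. -/
noncomputable section

/-!
The potential `(1 - x) / δ` dominates the series: the constraint `1 - s (n+1) ≤ s n - δ` gives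
`r (1 + (1 - s (n+1)) / δ) ≤ (1 - s n) / δ` for `r = (1 - s n) / s n`, so the partial sums plus
the current product times `(1 - s N) / δ` never exceed `(1 - x) / δ`. Hence `Φ x ≤ (1 - δ) / δ`,
and the sequence `δ, 1, 1, …` attains this bound at `x = δ`.
-/

open Finset

lemma ratio_mul_one_add_le {δ a b : ℝ} (hδ : 0 < δ) (ha : 0 < a) (ha1 : a ≤ 1)
    (hab : 1 - a + δ ≤ b) :
    (1 - a) / a * (1 + (1 - b) / δ) ≤ (1 - a) / δ := by
  have hb : 1 + (1 - b) / δ ≤ a / δ := by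
    rw [← sub_nonneg]
    have : a / δ - (1 + (1 - b) / δ) = (a + b - 1 - δ) / δ := by field_simp; ring
    rw [this]
    exact div_nonneg (by linarith) hδ.le
  calc (1 - a) / a * (1 + (1 - b) / δ) ≤ (1 - a) / a * (a / δ) :=
        mul_le_mul_of_nonneg_left hb (div_nonneg (by linarith) ha.le)
    _ = (1 - a) / δ := by field_simp

namespace Adm

variable {δ x : ℝ} {s : ℕ → ℝ}

lemma pos (hδ : 0 < δ) (hs : Adm δ x s) (n : ℕ) : 0 < s n :=
  hδ.trans_le (hs.2.1 n).1

lemma ratio_nonneg (hδ : 0 < δ) (hs : Adm δ x s) (i : ℕ) : 0 ≤ (1 - s i) / s i :=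
  div_nonneg (by linarith [(hs.2.1 i).2]) (hs.pos hδ i).le

lemma prod_ratio_nonneg (hδ : 0 < δ) (hs : Adm δ x s) (n : ℕ) :
    0 ≤ ∏ i ∈ range n, (1 - s i) / s i :=
  prod_nonneg fun i _ => hs.ratio_nonneg hδ i

lemma sum_add_potential_le (hδ : 0 < δ) (hs : Adm δ x s) (N : ℕ) :
    ∑ n ∈ range N, ∏ i ∈ range (n + 1), (1 - s i) / s i
      + (∏ i ∈ range N, (1 - s i) / s i) * ((1 - s N) / δ) ≤ (1 - x) / δ := by
  induction N with
  | zero => simp [hs.1]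
  | succ N ih =>
    set P := ∏ i ∈ range N, (1 - s i) / s i
    have hstep : P * ((1 - s N) / s N) * (1 + (1 - s (N + 1)) / δ) ≤ P * ((1 - s N) / δ) := by
      rw [mul_assoc]
      exact mul_le_mul_of_nonneg_left
        (ratio_mul_one_add_le hδ (hs.pos hδ N) (hs.2.1 N).2 (hs.2.2 N))
        (hs.prod_ratio_nonneg hδ N)
    rw [sum_range_succ, prod_range_succ]
    linarith

lemma tsum_le (hδ : 0 < δ) (hs : Adm δ x s) :
    ∑' n, ∏ i ∈ range (n + 1), (1 - s i) / s i ≤ (1 - x) / δ := by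
  refine Real.tsum_le_of_sum_range_le (fun n => hs.prod_ratio_nonneg hδ (n + 1)) fun N => ?_
  have hpot : 0 ≤ (∏ i ∈ range N, (1 - s i) / s i) * ((1 - s N) / δ) :=
    mul_nonneg (hs.prod_ratio_nonneg hδ N) (div_nonneg (by linarith [(hs.2.1 N).2]) hδ.le)
  linarith [hs.sum_add_potential_le hδ N]

end Adm

lemma Phi_le {δ x : ℝ} (hδ : 0 < δ) (hx : x ≤ 1) : Phi δ x ≤ (1 - x) / δ := by
  refine Real.sSup_le ?_ (div_nonneg (by linarith) hδ.le)
  rintro r ⟨s, hs, rfl⟩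
  exact hs.tsum_le hδ

lemma adm_start_then_one {δ : ℝ} (hδ1 : δ ≤ 1) :
    Adm δ δ fun n => if n = 0 then δ else 1 := by
  refine ⟨rfl, fun n => ?_, fun n => ?_⟩
  · dsimp only
    split_ifs
    exacts [⟨le_rfl, hδ1⟩, ⟨hδ1, le_rfl⟩]
  · simp only [Nat.add_one_ne_zero, if_false]
    split_ifs <;> linarith

lemma tsum_start_then_one (δ : ℝ) :
    ∑' n, ∏ i ∈ range (n + 1), (1 - (if i = 0 then δ else 1)) / (if i = 0 then δ else 1)
      = (1 - δ) / δ := by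
  rw [tsum_eq_single 0]
  · simp
  · intro n hn
    exact prod_eq_zero (i := 1) (by simpa [Nat.pos_iff_ne_zero] using hn) (by simp)

lemma Phi_self {δ : ℝ} (hδ : 0 < δ) (hδ1 : δ ≤ 1) : Phi δ δ = (1 - δ) / δ := by
  refine le_antisymm (Phi_le hδ hδ1) (le_csSup ⟨(1 - δ) / δ, ?_⟩
    ⟨_, adm_start_then_one hδ1, (tsum_start_then_one δ).symm⟩)
  rintro r ⟨s, hs, rfl⟩
  exact hs.tsum_le hδ

theorem bellman_sup (δ : ℝ) (hδ : δ ∈ Set.Ioc (1 / 2 : ℝ) 1) :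
    sSup (Phi δ '' Set.Icc δ 1) = (1 - δ) / δ := by
  have hδ0 : 0 < δ := by linarith [hδ.1]
  refine IsGreatest.csSup_eq ⟨⟨δ, ⟨le_rfl, hδ.2⟩, Phi_self hδ0 hδ.2⟩, ?_⟩
  rintro _ ⟨x, hx, rfl⟩
  exact (Phi_le hδ0 hx.2).trans (by gcongr; exact hx.1)
end
end
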